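/- Define f : ℝ → ℝ by f(x) = |x|^{1/4} if |x| ≤ 1 and f(x) = 1 if |x| > 1, and let W : ℝ → ℝ be the 1-periodic function with W(y) = 1/2 − |y| for y ∈ [−1/2, 1/2]. Then for every ε ∈ (0, 2^{−80}) and every absolutely continuous curve γ : [0,1] → ℝ with γ(0) = 0, one has ∫₀¹ ( f(γ(s)) + W(γ(s)/ε) + |γ̇(s)|²/2 ) ds ≥ (1/32) ε^{1/4}. -/

import Mathlib

/-!
The potential `x ↦ f x + W (x / ε)` is already bounded below by `ε^{1/4}/32` pointwise:
if `|x| < ε/4` then `x/ε` is within `1/4` of the integer `0`, so `W (x/ε) ≥ 1/4`; otherwise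
`f x ≥ (ε/4)^{1/4} ≥ ε^{1/4}/4`. The kinetic term is nonnegative and `[0,1]` has unit length.
-/

open MeasureTheory Real Set

noncomputable section

/-- `f(x) = |x|^{1/4}` for `|x| ≤ 1`, and `f(x) = 1` for `|x| > 1`. -/
def f (x : ℝ) : ℝ := if |x| ≤ 1 then |x| ^ ((1:ℝ)/4) else 1

/-- The 1-periodic extension of `y ↦ 1/2 − |y|` from `[−1/2, 1/2]`; equivalently
`W(y) = 1/2 − dist(y, ℤ)`. -/
def W (y : ℝ) : ℝ := 1/2 - |y - round y|

/-- `γ : [a,b] → ℝ` is absolutely continuous with (a.e.) derivative `γ'`. -/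
def IsAC1 (a b : ℝ) (γ γ' : ℝ → ℝ) : Prop :=
  IntegrableOn γ' (Icc a b) volume ∧
    ∀ c d : ℝ, a ≤ c → c ≤ d → d ≤ b → γ d - γ c = ∫ s in c..d, γ' s

lemma W_nonneg (y : ℝ) : 0 ≤ W y := by
  have := abs_sub_round y
  unfold W
  linarith

lemma W_eq_of_abs_lt {y : ℝ} (hy : |y| < 1 / 2) : W y = 1 / 2 - |y| := by
  have hround : round y = 0 := by
    rw [round_eq_zero_iff]
    obtain ⟨hlo, hhi⟩ := abs_lt.mp hy
    exact ⟨by linarith, hhi⟩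
  simp [W, hround]

lemma f_nonneg (x : ℝ) : 0 ≤ f x := by
  unfold f
  split
  · exact rpow_nonneg (abs_nonneg x) _
  · exact zero_le_one

lemma rpow_le_f {t x : ℝ} (ht : 0 ≤ t) (ht1 : t ≤ 1) (htx : t ≤ |x|) :
    t ^ ((1 : ℝ) / 4) ≤ f x := by
  unfold f
  split
  · exact rpow_le_rpow ht htx (by norm_num)
  · exact rpow_le_one ht ht1 (by norm_num)

lemma f_add_W_div_ge {ε : ℝ} (hε : 0 < ε) (hε1 : ε ≤ 1) (x : ℝ) :
    (1 / 32 : ℝ) * ε ^ ((1 : ℝ) / 4) ≤ f x + W (x / ε) := by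
  have hroot_nonneg : 0 ≤ ε ^ ((1 : ℝ) / 4) := rpow_nonneg hε.le _
  have hroot_le_one : ε ^ ((1 : ℝ) / 4) ≤ 1 := rpow_le_one hε.le hε1 (by norm_num)
  rcases lt_or_ge |x| (ε / 4) with hx | hx
  · have hxε : |x / ε| < 1 / 4 := by
      rw [abs_div, abs_of_pos hε, div_lt_iff₀ hε]
      linarith
    have hW : 1 / 4 ≤ W (x / ε) := by
      rw [W_eq_of_abs_lt (by linarith)]
      linarith
    linarith [f_nonneg x]
  · have hquarter : (1 / 4 : ℝ) ≤ (1 / 4 : ℝ) ^ ((1 : ℝ) / 4) :=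
      self_le_rpow_of_le_one (by norm_num) (by norm_num) (by norm_num)
    have hsplit : (ε / 4) ^ ((1 : ℝ) / 4) = (1 / 4 : ℝ) ^ ((1 : ℝ) / 4) * ε ^ ((1 : ℝ) / 4) := by
      rw [← mul_rpow (by norm_num) hε.le]
      ring_nf
    have hf : (ε / 4) ^ ((1 : ℝ) / 4) ≤ f x := rpow_le_f (by positivity) (by linarith) hx
    nlinarith [W_nonneg (x / ε)]

/-- Proposition 4.2 (variational content): without the Lipschitz-in-`x` condition
(H4), the control functional at time `1` is at least `(1/32) ε^{1/4}`.  The cost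
integral is taken in `[0,∞]` since the integrand is nonnegative. -/
theorem stmt_9 :
    ∀ ε : ℝ, 0 < ε → ε < (2:ℝ) ^ (-80 : ℤ) →
      ∀ γ γ' : ℝ → ℝ, IsAC1 0 1 γ γ' → γ 0 = 0 →
        ENNReal.ofReal ((1/32 : ℝ) * ε ^ ((1:ℝ)/4)) ≤
          ∫⁻ s in Icc (0:ℝ) 1,
            ENNReal.ofReal (f (γ s) + W (γ s / ε) + |γ' s| ^ 2 / 2) := by
  intro ε hε hε_small γ γ' _ _
  have hε1 : ε ≤ 1 := hε_small.le.trans (by norm_num)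
  have hpointwise (s : ℝ) :
      (1 / 32 : ℝ) * ε ^ ((1 : ℝ) / 4) ≤ f (γ s) + W (γ s / ε) + |γ' s| ^ 2 / 2 := by
    linarith [f_add_W_div_ge hε hε1 (γ s), sq_nonneg |γ' s|]
  calc ENNReal.ofReal ((1 / 32 : ℝ) * ε ^ ((1 : ℝ) / 4))
      = ∫⁻ _ in Icc (0 : ℝ) 1, ENNReal.ofReal ((1 / 32 : ℝ) * ε ^ ((1 : ℝ) / 4)) := by
        rw [setLIntegral_const, Real.volume_Icc]
        norm_num
    _ ≤ _ := lintegral_mono fun s => ENNReal.ofReal_le_ofReal (hpointwise s)
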